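/- arXiv:math/0503249 — 7 statements merged into one kernel-verified Lean document; each statement's English description precedes it below -/
import Mathlib

section
/- Let 𝒜 be a finite-dimensional LSA with a Hessian-type inner product H (viewed as a matrix with respect to a fixed basis). Define φ : 𝒜 → aff(n+1) by φ(a) = the pair of the (n+1)×(n+1) matrix with blocks [[λ_a, 0],[aᵀH, 0]] and the translation vector (a, 0), where λ_a denotes left multiplication by a. Then φ is a Lie algebra homomorphism from the underlying Lie algebra of 𝒜 (with bracket [a,b] = ab − ba) into the affine Lie algebra aff(n+1). -/
/-!
Left symmetry says exactly that `λ_{ab - ba} = [λ_a, λ_b]`, and the Hessian condition, read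
against each basis vector, says `(ab - ba)ᵀ H = aᵀ H λ_b - bᵀ H λ_a`; these are the two nonzero
blocks of `[φ(a), φ(b)]`. On translation parts, `λ_a b - λ_b a = ab - ba`, while the extra
coordinate `aᵀ H b - bᵀ H a` vanishes because `H` is symmetric.
-/

open Matrix

section LeftSymmetric

variable {R M : Type*} [CommRing R] [AddCommGroup M] [Module R M]

def IsLeftSymmetric (mul : M →ₗ[R] M →ₗ[R] M) : Prop :=
  ∀ a b c, mul (mul a b) c - mul a (mul b c) = mul (mul b a) c - mul b (mul a c)

theorem IsLeftSymmetric.mul_commutator {mul : M →ₗ[R] M →ₗ[R] M} (hls : IsLeftSymmetric mul)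
    (a b : M) : mul (mul a b - mul b a) = mul a ∘ₗ mul b - mul b ∘ₗ mul a := by
  refine LinearMap.ext fun c => ?_
  simpa [sub_eq_sub_iff_sub_eq_sub] using hls a b c

end LeftSymmetric

theorem Matrix.IsSymm.vecMul_dotProduct_comm {R ι : Type*} [CommRing R] [Fintype ι]
    {H : Matrix ι ι R} (hH : H.IsSymm) (a b : ι → R) : a ᵥ* H ⬝ᵥ b = b ᵥ* H ⬝ᵥ a := by
  rw [← dotProduct_mulVec, dotProduct_comm, ← mulVec_transpose, hH.eq]

theorem Matrix.fromBlocks_zero_mulVec_sumElim_zero {R m n : Type*} [CommRing R] [Fintype m]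
    [Fintype n] (A : Matrix m m R) (C : Matrix n m R) (y : m → R) :
    fromBlocks A 0 C (0 : Matrix n n R) *ᵥ Sum.elim y (fun _ => 0)
      = Sum.elim (A *ᵥ y) (C *ᵥ y) := by
  simp [fromBlocks_mulVec]

section AffineRepresentation

variable {R ι : Type*} [CommRing R] [Fintype ι] [DecidableEq ι]

def IsHessianType (mul : (ι → R) →ₗ[R] (ι → R) →ₗ[R] (ι → R)) (H : Matrix ι ι R) : Prop :=
  ∀ a b c : ι → R, a ⬝ᵥ H *ᵥ mul b c - mul a b ⬝ᵥ H *ᵥ c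
    = b ⬝ᵥ H *ᵥ mul a c - mul b a ⬝ᵥ H *ᵥ c

/-- The linear part `[[λ_a, 0], [aᵀH, 0]]` of `φ(a)`. -/
def affineRepMatrix (mul : (ι → R) →ₗ[R] (ι → R) →ₗ[R] (ι → R)) (H : Matrix ι ι R)
    (a : ι → R) : Matrix (ι ⊕ Unit) (ι ⊕ Unit) R :=
  fromBlocks (LinearMap.toMatrix' (mul a)) 0 (replicateRow Unit (a ᵥ* H)) 0

variable {mul : (ι → R) →ₗ[R] (ι → R) →ₗ[R] (ι → R)} {H : Matrix ι ι R}

theorem IsHessianType.vecMul_commutator (hH : IsHessianType mul H) (a b : ι → R) :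
    (mul a b - mul b a) ᵥ* H
      = a ᵥ* H ᵥ* LinearMap.toMatrix' (mul b) - b ᵥ* H ᵥ* LinearMap.toMatrix' (mul a) := by
  ext j
  simp only [← dotProduct_single_one _ j, ← dotProduct_mulVec, LinearMap.toMatrix'_mulVec,
    sub_dotProduct]
  linear_combination -hH a b (Pi.single j 1)

theorem affineRepMatrix_commutator (hls : IsLeftSymmetric mul) (hH : IsHessianType mul H)
    (a b : ι → R) :
    affineRepMatrix mul H (mul a b - mul b a)
      = affineRepMatrix mul H a * affineRepMatrix mul H b
        - affineRepMatrix mul H b * affineRepMatrix mul H a := by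
  simp only [affineRepMatrix, hls.mul_commutator, hH.vecMul_commutator, fromBlocks_multiply,
    LinearMap.toMatrix'_comp, map_sub, ← replicateRow_vecMul, Matrix.mul_zero, Matrix.zero_mul,
    add_zero]
  ext (i | i) (j | j) <;> simp [replicateRow_apply]

theorem affineRepMatrix_mulVec_sub (hH : H.IsSymm) (a b : ι → R) :
    affineRepMatrix mul H a *ᵥ Sum.elim b (fun _ => 0)
        - affineRepMatrix mul H b *ᵥ Sum.elim a (fun _ => 0)
      = Sum.elim (mul a b - mul b a) (fun _ => 0) := by
  ext (i | u)
  all_goals simp only [affineRepMatrix, Pi.sub_apply, fromBlocks_zero_mulVec_sumElim_zero]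
  · simp
  · simp [replicateRow_mulVec_eq_const, hH.vecMul_dotProduct_comm a b]

end AffineRepresentation

theorem stmt_2 (n : ℕ)
    (mul : (Fin n → ℝ) →ₗ[ℝ] (Fin n → ℝ) →ₗ[ℝ] (Fin n → ℝ))
    (hls : ∀ a b c, mul (mul a b) c - mul a (mul b c) = mul (mul b a) c - mul b (mul a c))
    (H : Matrix (Fin n) (Fin n) ℝ) (hH : H.IsSymm)
    (hhess : ∀ a b c : Fin n → ℝ,
      a ⬝ᵥ H.mulVec (mul b c) - (mul a b) ⬝ᵥ H.mulVec c
        = b ⬝ᵥ H.mulVec (mul a c) - (mul b a) ⬝ᵥ H.mulVec c)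
    (φM : (Fin n → ℝ) → Matrix (Fin n ⊕ Unit) (Fin n ⊕ Unit) ℝ)
    (hφM : ∀ a, φM a = Matrix.fromBlocks (LinearMap.toMatrix' (mul a)) 0
        (Matrix.of fun _ j => Matrix.vecMul a H j) 0)
    (φv : (Fin n → ℝ) → (Fin n ⊕ Unit) → ℝ)
    (hφv : ∀ a, φv a = Sum.elim a fun _ => 0) :
    ∀ a b : Fin n → ℝ,
      φM (mul a b - mul b a) = φM a * φM b - φM b * φM a ∧
      φv (mul a b - mul b a) = (φM a).mulVec (φv b) - (φM b).mulVec (φv a) := by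
  have hφM_eq : φM = affineRepMatrix mul H := funext hφM
  intro a b
  simp only [hφM_eq, hφv]
  exact ⟨affineRepMatrix_commutator hls hhess a b, (affineRepMatrix_mulVec_sub hH a b).symm⟩
end

section
/- Let 𝒜 be a finite-dimensional LSA. Then the following are equivalent: (a) every right multiplication ρ_a has trace zero; (b) det(I + ρ_a) = 1 for all a ∈ 𝒜, where ρ_a denotes right multiplication by a. (This is the completeness criterion for LSAs.) -/
open Polynomial LinearMap Module

/-- Power sums vanishing forces all values to be zero (Vandermonde argument). -/
lemma aux_powersum {s : Finset ℂ} {c : ℂ → ℂ} (hc : ∀ μ ∈ s, c μ ≠ 0)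
    (h : ∀ k : ℕ, 1 ≤ k → ∑ μ ∈ s, c μ * μ ^ k = 0) : ∀ μ ∈ s, μ = 0 := by
  classical
  by_contra hcon
  push_neg at hcon
  obtain ⟨μ0, hμ0s, hμ0⟩ := hcon
  set t := s.filter (fun μ => μ ≠ 0) with ht
  have hμ0t : μ0 ∈ t := by simp [ht, hμ0s, hμ0]
  have hsum : ∀ k : ℕ, 1 ≤ k → ∑ μ ∈ t, c μ * μ ^ k = 0 := by
    intro k hk
    rw [← h k hk]
    rw [ht]
    refine Finset.sum_subset (Finset.filter_subset _ _) fun μ hμs hμt => ?_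
    have h0 : μ = 0 := by simpa [hμs] using hμt
    rw [h0, zero_pow (by omega), mul_zero]
  -- index the elements of t
  let e := t.equivFin.symm
  set r := t.card
  let v : Fin r → ℂ := fun i => (e i : ℂ)
  have hv : Function.Injective v := by
    intro i j hij
    exact e.injective (Subtype.ext hij)
  let w : Fin r → ℂ := fun i => c (v i) * v i
  have hw : Matrix.vecMul w (Matrix.vandermonde v) = 0 := by
    funext j
    have : ∑ i, w i * v i ^ (j : ℕ) = ∑ μ ∈ t, c μ * μ ^ ((j : ℕ) + 1) := by
      rw [← Finset.sum_coe_sort t]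
      rw [← Equiv.sum_comp e (fun μ : {x // x ∈ t} => c (μ : ℂ) * (μ : ℂ) ^ ((j : ℕ) + 1))]
      refine Finset.sum_congr rfl fun i _ => ?_
      simp only [w, v]
      ring
    simp only [Matrix.vecMul, Matrix.vandermonde, Pi.zero_apply]
    simpa [dotProduct] using this.trans (hsum _ (by omega))
  have hdet : (Matrix.vandermonde v).det ≠ 0 := by
    rw [Matrix.det_vandermonde]
    refine Finset.prod_ne_zero_iff.mpr fun i _ => Finset.prod_ne_zero_iff.mpr fun j hj => ?_
    have : i ≠ j := (Finset.mem_Ioi.mp hj).ne'.symm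
    exact sub_ne_zero.mpr fun hh => this (hv hh.symm)
  have hw0 : w = 0 := Matrix.eq_zero_of_vecMul_eq_zero hdet hw
  have : w (e.symm ⟨μ0, hμ0t⟩) = 0 := by rw [hw0]; rfl
  simp only [w, v, Equiv.apply_symm_apply] at this
  rcases mul_eq_zero.mp this with h1 | h2
  · exact hc μ0 (Finset.mem_filter.mp hμ0t).1 h1
  · exact hμ0 h2

lemma aux_nilpotent_end {V : Type*} [AddCommGroup V] [Module ℂ V] [FiniteDimensional ℂ V]
    (f : Module.End ℂ V) (h : ∀ k : ℕ, 1 ≤ k → trace ℂ V (f ^ k) = 0) : IsNilpotent f := by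
  classical
  have htop := Module.End.iSup_maxGenEigenspace_eq_top f
  have hds := DirectSum.isInternal_submodule_of_iSupIndep_of_iSup_eq_top
      f.independent_maxGenEigenspace htop
  have hfin : {μ : ℂ | f.maxGenEigenspace μ ≠ ⊥}.Finite :=
    WellFoundedGT.finite_ne_bot_of_iSupIndep f.independent_maxGenEigenspace
  have hf1 : ∀ μ : ℂ, Set.MapsTo f (f.maxGenEigenspace μ) (f.maxGenEigenspace μ) :=
    fun μ => Module.End.mapsTo_maxGenEigenspace_of_comm rfl μ
  have hmapsto : ∀ (k : ℕ) (μ : ℂ),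
      Set.MapsTo (f ^ k) (f.maxGenEigenspace μ) (f.maxGenEigenspace μ) :=
    fun k μ => Module.End.mapsTo_maxGenEigenspace_of_comm (Commute.pow_right rfl k) μ
  -- trace of the restriction of f to a generalized eigenspace
  have keyres : ∀ (μ : ℂ) (k : ℕ),
      trace ℂ _ ((f.restrict (hf1 μ)) ^ k)
        = (finrank ℂ (f.maxGenEigenspace μ) : ℂ) * μ ^ k := by
    intro μ k
    induction k with
    | zero => simp [trace_one]
    | succ k ih =>
      have hnil : IsNilpotent (f.restrict (hf1 μ) - algebraMap ℂ _ μ) := by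
        have := f.isNilpotent_restrict_maxGenEigenspace_sub_algebraMap μ
        convert this using 2
        ext x; rfl
      have := trace_comp_eq_mul_of_commute_of_isNilpotent (R := ℂ)
        (M := f.maxGenEigenspace μ) μ
        (Commute.pow_right (rfl : Commute (f.restrict (hf1 μ)) (f.restrict (hf1 μ))) k).symm
        hnil
      rw [pow_succ, Module.End.mul_eq_comp] at *
      rw [this, ih]
      ring
  -- trace of f^k is the sum of eigenvalue contributions
  have htr : ∀ k : ℕ, 1 ≤ k →
      ∑ μ ∈ hfin.toFinset, (finrank ℂ (f.maxGenEigenspace μ) : ℂ) * μ ^ k = 0 := by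
    intro k hk
    rw [← h k hk, trace_eq_sum_trace_restrict' hds hfin (fun μ => hmapsto k μ)]
    refine Finset.sum_congr rfl fun μ _ => ?_
    rw [← keyres μ k, Module.End.pow_restrict k (hf1 μ)]
  -- all eigenvalues are zero
  have hzero : ∀ μ : ℂ, f.maxGenEigenspace μ ≠ ⊥ → μ = 0 := by
    intro μ hμ
    refine aux_powersum (c := fun μ => (finrank ℂ (f.maxGenEigenspace μ) : ℂ)) ?_ htr μ
      (hfin.mem_toFinset.mpr hμ)
    intro ν hν
    have : Nontrivial (f.maxGenEigenspace ν) :=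
      Submodule.nontrivial_iff_ne_bot.mpr (hfin.mem_toFinset.mp hν)
    exact_mod_cast (Module.finrank_pos (R := ℂ) (M := f.maxGenEigenspace ν)).ne'
  -- conclude nilpotency
  rw [Module.End.isNilpotent_iff_of_finite]
  intro m
  have hm : m ∈ f.maxGenEigenspace 0 := by
    have hle : (⨆ μ, f.maxGenEigenspace μ) ≤ f.maxGenEigenspace 0 := by
      refine iSup_le fun μ => ?_
      rcases eq_or_ne (f.maxGenEigenspace μ) ⊥ with hb | hb
      · rw [hb]; exact bot_le
      · rw [hzero μ hb]
    exact hle (htop ▸ Submodule.mem_top)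
  rw [Module.End.mem_maxGenEigenspace] at hm
  obtain ⟨k, hk⟩ := hm
  exact ⟨k, by simpa using hk⟩

lemma aux_nilpotent_matrix {m : Type*} [Fintype m] [DecidableEq m] (N : Matrix m m ℂ)
    (h : ∀ k : ℕ, 1 ≤ k → (N ^ k).trace = 0) : IsNilpotent N := by
  let b : Basis m ℂ (m → ℂ) := Pi.basisFun ℂ m
  have hnil : IsNilpotent (Matrix.toLin b b N) := by
    refine aux_nilpotent_end _ fun k hk => ?_
    rw [trace_eq_matrix_trace ℂ b, ← LinearMap.toMatrix_pow, LinearMap.toMatrix_toLin]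
    exact h k hk
  rwa [← LinearMap.isNilpotent_toMatrix_iff b, LinearMap.toMatrix_toLin] at hnil

lemma aux_eval_charpoly {m : Type*} [Fintype m] [DecidableEq m] {K : Type*} [Field K]
    (N : Matrix m m K) (r : K) :
    (Matrix.charpoly N).eval r = (Matrix.scalar m r - N).det := by
  rw [Matrix.charpoly, ← coe_evalRingHom, RingHom.map_det]
  congr 1
  ext i j
  rcases eq_or_ne i j with rfl | hij
  · simp [Matrix.charmatrix_apply_eq, Matrix.scalar_apply]
  · simp [Matrix.charmatrix_apply_ne _ _ _ hij, Matrix.scalar_apply,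
      Matrix.diagonal_apply_ne _ hij]

lemma aux_det_one_add {m : Type*} [Fintype m] [DecidableEq m] {K : Type*} [Field K]
    (N : Matrix m m K) (h : IsNilpotent N) : (1 + N).det = 1 := by
  have hc : Matrix.charpoly N = X ^ Fintype.card m := by
    rw [← sub_eq_zero]
    exact (Matrix.isNilpotent_charpoly_sub_pow_of_isNilpotent h).eq_zero
  have he := aux_eval_charpoly N (-1)
  rw [hc] at he
  have h1 : Matrix.scalar m (-1 : K) - N = -(1 + N) := by
    rw [map_neg, map_one, neg_add, sub_eq_add_neg]
  rw [h1, Matrix.det_neg, eval_pow, eval_X] at he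
  have := he.symm
  rwa [mul_right_eq_self₀, or_iff_left (pow_ne_zero _ (by norm_num : (-1 : K) ≠ 0))] at this

lemma aux_trace_map {m : Type*} [Fintype m] {R S : Type*} [CommRing R] [CommRing S]
    (f : R →+* S) (A : Matrix m m R) : (A.map f).trace = f A.trace := by
  simp [Matrix.trace, Matrix.diag, map_sum]

theorem stmt_3 (E : Type*) [AddCommGroup E] [Module ℝ E] [FiniteDimensional ℝ E]
    (mul : E →ₗ[ℝ] E →ₗ[ℝ] E)
    (hls : ∀ a b c, mul (mul a b) c - mul a (mul b c) = mul (mul b a) c - mul b (mul a c)) :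
    (∀ a, LinearMap.trace ℝ E (mul.flip a) = 0) ↔
      (∀ a, LinearMap.det (LinearMap.id + mul.flip a) = 1) := by
  classical
  set n := Module.finrank ℝ E
  let b : Basis (Fin n) ℝ E := Module.finBasis ℝ E
  constructor
  · intro h a
    -- operator identity from left-symmetry
    have hop : ∀ c : E, (mul.flip a : Module.End ℝ E) * mul.flip c
        = mul.flip (mul c a) + (mul.flip a : Module.End ℝ E) * mul c
          - mul c * (mul.flip a : Module.End ℝ E) := by
      intro c
      ext x
      have h1 := hls x c a
      simp only [Module.End.mul_apply, LinearMap.flip_apply, LinearMap.add_apply,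
        LinearMap.sub_apply] at *
      rw [add_sub_assoc]
      exact sub_eq_iff_eq_add'.mp h1
    -- trace of ρ_c ∘ ρ_a ^ m vanishes
    have tr0 : ∀ m : ℕ, ∀ c : E,
        trace ℝ E ((mul.flip c : Module.End ℝ E) * (mul.flip a : Module.End ℝ E) ^ m) = 0 := by
      intro m
      induction m with
      | zero => intro c; simpa using h c
      | succ m ih =>
        intro c
        have e1 : (mul.flip c : Module.End ℝ E) * (mul.flip a : Module.End ℝ E) ^ (m + 1)
            = ((mul.flip c : Module.End ℝ E) * (mul.flip a : Module.End ℝ E) ^ m)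
              * mul.flip a := by
          rw [pow_succ, mul_assoc]
        rw [e1, trace_mul_comm, ← mul_assoc, hop c, sub_mul, add_mul, map_sub, map_add]
        have e2 : trace ℝ E ((mul.flip a : Module.End ℝ E) * mul c
            * (mul.flip a : Module.End ℝ E) ^ m)
            = trace ℝ E ((mul c : Module.End ℝ E)
              * (mul.flip a : Module.End ℝ E) ^ (m + 1)) := by
          rw [mul_assoc, trace_mul_comm, mul_assoc, ← pow_succ]
        have e3 : trace ℝ E ((mul c : Module.End ℝ E) * (mul.flip a : Module.End ℝ E)
            * (mul.flip a : Module.End ℝ E) ^ m)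
            = trace ℝ E ((mul c : Module.End ℝ E)
              * (mul.flip a : Module.End ℝ E) ^ (m + 1)) := by
          rw [mul_assoc, ← pow_succ']
        rw [e2, e3, ih (mul c a)]
        ring
    have trpow : ∀ k : ℕ, 1 ≤ k →
        trace ℝ E ((mul.flip a : Module.End ℝ E) ^ k) = 0 := by
      intro k hk
      obtain ⟨m, rfl⟩ := Nat.exists_eq_add_of_le hk
      rw [add_comm, pow_succ']
      exact tr0 m a
    -- pass to matrices
    set M : Matrix (Fin n) (Fin n) ℝ := LinearMap.toMatrix b b (mul.flip a) with hM
    have trM : ∀ k : ℕ, 1 ≤ k → (M ^ k).trace = 0 := by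
      intro k hk
      have := trpow k hk
      rwa [trace_eq_matrix_trace ℝ b, ← LinearMap.toMatrix_pow, ← hM] at this
    set N : Matrix (Fin n) (Fin n) ℂ := M.map (algebraMap ℝ ℂ) with hN
    have trN : ∀ k : ℕ, 1 ≤ k → (N ^ k).trace = 0 := by
      intro k hk
      have hNk : N ^ k = (M ^ k).map (algebraMap ℝ ℂ) := by
        rw [hN, ← RingHom.mapMatrix_apply, ← map_pow, RingHom.mapMatrix_apply]
      rw [hNk, aux_trace_map, trM k hk, map_zero]
    have hnil : IsNilpotent N := aux_nilpotent_matrix N trN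
    have hdetN : (1 + N).det = 1 := aux_det_one_add N hnil
    have hdetM : (1 + M).det = 1 := by
      apply (algebraMap ℝ ℂ).injective
      have hmap : (1 + M).map (algebraMap ℝ ℂ) = 1 + N := by
        rw [Matrix.map_add _ (fun x y => map_add _ x y), Matrix.map_one _ (map_zero _) (map_one _), hN]
      rw [map_one, RingHom.map_det, RingHom.mapMatrix_apply, hmap, hdetN]
    rw [← LinearMap.det_toMatrix b, map_add, LinearMap.toMatrix_id]
    exact hdetM
  · intro h a
    set M : Matrix (Fin n) (Fin n) ℝ := LinearMap.toMatrix b b (mul.flip a) with hM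
    have hdet : ∀ t : ℝ, (1 + t • M).det = 1 := by
      intro t
      have := h (t • a)
      rw [← LinearMap.det_toMatrix b, map_add, LinearMap.toMatrix_id] at this
      rw [map_smul, map_smul] at this
      exact this
    -- use the expansion of det (1 + t • M)
    have hexp := fun t : ℝ => Matrix.det_one_add_smul t M
    have hzero : ∀ t : ℝ, M.trace * t
        + (Matrix.det (1 + (X : ℝ[X]) • M.map C)).divX.divX.eval t * t ^ 2 = 0 := by
      intro t
      have := (hexp t).symm.trans (hdet t)
      linarith [this]
    set f : ℝ[X] := (Matrix.det (1 + (X : ℝ[X]) • M.map C)).divX.divX with hf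
    have hpoly : (C M.trace) * X + f * X ^ 2 = 0 := by
      apply Polynomial.funext
      intro t
      simpa using hzero t
    have htr : M.trace = 0 := by
      have := congrArg (fun p => Polynomial.coeff p 1) hpoly
      simpa [Polynomial.coeff_mul_X_pow'] using this
    rw [trace_eq_matrix_trace ℝ b, ← hM, htr]
end

section
/- Let 𝒜 be a complete abelian LSA of dimension n with nondegenerate Hessian-type inner product H, and let λ_x denote left multiplication. Define F(x) = xᵀH(½I − ⅓λ_x + ¼λ_x² − ⋯)x. Then the differential of F satisfies dF_x = xᵀH(I + λ_x)^{-1}, and the Hessian of F at 0 equals H. -/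
open Matrix

/-- The matrix of second partial derivatives (Hessian) of `F` at `x`. -/
noncomputable def hessianMatrix (n : ℕ) (F : (Fin n → ℝ) → ℝ) (x : Fin n → ℝ) :
    Matrix (Fin n) (Fin n) ℝ :=
  Matrix.of fun i j => fderiv ℝ (fun y => fderiv ℝ F y (Pi.single j 1)) x (Pi.single i 1)

/-- `pw n mul k x = x^(k+1)`, the `(k+1)`-st power of `x`. -/
def pw (n : ℕ) (mul : (Fin n → ℝ) →ₗ[ℝ] (Fin n → ℝ) →ₗ[ℝ] (Fin n → ℝ)) :
    ℕ → (Fin n → ℝ) → (Fin n → ℝ)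
  | 0 => fun y => y
  | k + 1 => fun y => mul y (pw n mul k y)

/-- `pwc n mul w k y = y^k ⬝ w`. -/
def pwc (n : ℕ) (mul : (Fin n → ℝ) →ₗ[ℝ] (Fin n → ℝ) →ₗ[ℝ] (Fin n → ℝ)) (w : Fin n → ℝ) :
    ℕ → (Fin n → ℝ) → (Fin n → ℝ)
  | 0 => fun _ => w
  | k + 1 => fun y => mul y (pwc n mul w k y)

/-- Multiplication as a continuous bilinear map. -/
noncomputable def mulCLM (n : ℕ) (mul : (Fin n → ℝ) →ₗ[ℝ] (Fin n → ℝ) →ₗ[ℝ] (Fin n → ℝ)) :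
    (Fin n → ℝ) →L[ℝ] (Fin n → ℝ) →L[ℝ] (Fin n → ℝ) :=
  LinearMap.toContinuousLinearMap
    ((LinearMap.toContinuousLinearMap :
        ((Fin n → ℝ) →ₗ[ℝ] (Fin n → ℝ)) ≃ₗ[ℝ] ((Fin n → ℝ) →L[ℝ] (Fin n → ℝ))).toLinearMap ∘ₗ mul)

@[simp] lemma mulCLM_apply (n : ℕ) (mul : (Fin n → ℝ) →ₗ[ℝ] (Fin n → ℝ) →ₗ[ℝ] (Fin n → ℝ))
    (a b : Fin n → ℝ) : mulCLM n mul a b = mul a b := rfl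

/-- The bilinear form `a ⬝ᵥ H *ᵥ b` as a continuous bilinear map. -/
noncomputable def bcH (n : ℕ) (H : Matrix (Fin n) (Fin n) ℝ) :
    (Fin n → ℝ) →L[ℝ] (Fin n → ℝ) →L[ℝ] ℝ :=
  LinearMap.toContinuousLinearMap
    ((LinearMap.toContinuousLinearMap :
        ((Fin n → ℝ) →ₗ[ℝ] ℝ) ≃ₗ[ℝ] ((Fin n → ℝ) →L[ℝ] ℝ)).toLinearMap ∘ₗ
      LinearMap.mk₂ ℝ (fun a b => a ⬝ᵥ H *ᵥ b)
        (fun a a' b => by simp [add_dotProduct])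
        (fun c a b => by simp [smul_dotProduct])
        (fun a b b' => by simp [Matrix.mulVec_add, dotProduct_add])
        (fun c a b => by simp [Matrix.mulVec_smul, dotProduct_smul]))

@[simp] lemma bcH_apply (n : ℕ) (H : Matrix (Fin n) (Fin n) ℝ) (a b : Fin n → ℝ) :
    bcH n H a b = a ⬝ᵥ H *ᵥ b := rfl

theorem stmt_5 (n : ℕ)
    (mul : (Fin n → ℝ) →ₗ[ℝ] (Fin n → ℝ) →ₗ[ℝ] (Fin n → ℝ))
    (habel : ∀ a b, mul a b = mul b a)
    (hassoc : ∀ a b c, mul (mul a b) c = mul a (mul b c))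
    (lam : (Fin n → ℝ) → Matrix (Fin n) (Fin n) ℝ)
    (hlam : ∀ x, lam x = LinearMap.toMatrix' (mul x))
    (hnil : ∀ x, IsNilpotent (lam x))
    (H : Matrix (Fin n) (Fin n) ℝ) (hsymm : H.IsSymm)
    (hnd : ∀ x : Fin n → ℝ, (∀ y, x ⬝ᵥ H.mulVec y = 0) → x = 0)
    (hhess : ∀ a b c : Fin n → ℝ, a ⬝ᵥ H.mulVec (mul b c) = b ⬝ᵥ H.mulVec (mul a c))
    (F : (Fin n → ℝ) → ℝ)
    (hF : ∀ x, F x = x ⬝ᵥ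
      (H * (∑ k ∈ Finset.range n, ((-1 : ℝ) ^ k * ((k : ℝ) + 2)⁻¹) • (lam x) ^ k)).mulVec x) :
    (∀ x v : Fin n → ℝ, fderiv ℝ F x v = Matrix.vecMul x (H * (1 + lam x)⁻¹) ⬝ᵥ v) ∧
    hessianMatrix n F 0 = H := by
  -- basic facts about `lam`
  have hmv : ∀ x y : Fin n → ℝ, lam x *ᵥ y = mul x y := by
    intro x y
    rw [hlam, ← Matrix.toLin'_apply, Matrix.toLin'_toMatrix']
  have hlmul : ∀ a b : Fin n → ℝ, lam (mul a b) = lam a * lam b := by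
    intro a b
    apply (Matrix.toLin' (R := ℝ) (n := Fin n)).injective
    rw [Matrix.toLin'_mul]
    apply LinearMap.ext; intro z
    simp only [Matrix.toLin'_apply, LinearMap.comp_apply, hmv]
    exact hassoc a b z
  have hlpw : ∀ (k : ℕ) (x : Fin n → ℝ), lam (pw n mul k x) = (lam x) ^ (k + 1) := by
    intro k
    induction k with
    | zero => intro x; simp [pw, pow_one]
    | succ k ih =>
      intro x
      show lam (mul x (pw n mul k x)) = _
      rw [hlmul, ih, ← pow_succ']
  have hpwv : ∀ (k : ℕ) (x : Fin n → ℝ), pw n mul k x = (lam x) ^ k *ᵥ x := by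
    intro k
    induction k with
    | zero => intro x; simp [pw]
    | succ k ih =>
      intro x
      show mul x (pw n mul k x) = _
      rw [ih, ← hmv, Matrix.mulVec_mulVec, ← pow_succ']
  have hpwcv : ∀ (w : Fin n → ℝ) (k : ℕ) (x : Fin n → ℝ),
      pwc n mul w k x = (lam x) ^ k *ᵥ w := by
    intro w k
    induction k with
    | zero => intro x; simp [pwc]
    | succ k ih =>
      intro x
      show mul x (pwc n mul w k x) = _
      rw [ih, ← hmv, Matrix.mulVec_mulVec, ← pow_succ']
  -- symmetry facts
  have hs : ∀ a b : Fin n → ℝ, a ⬝ᵥ H *ᵥ b = b ⬝ᵥ H *ᵥ a := by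
    intro a b
    rw [Matrix.dotProduct_mulVec]
    nth_rewrite 1 [← hsymm.eq]
    rw [Matrix.vecMul_transpose, dotProduct_comm]
  have hsym1 : ∀ x a b : Fin n → ℝ, a ⬝ᵥ H *ᵥ (mul x b) = b ⬝ᵥ H *ᵥ (mul x a) := by
    intro x a b
    rw [hhess a x b, habel a b, hhess x b a]
  have hsymk : ∀ (k : ℕ) (x a b : Fin n → ℝ),
      a ⬝ᵥ H *ᵥ ((lam x) ^ k *ᵥ b) = b ⬝ᵥ H *ᵥ ((lam x) ^ k *ᵥ a) := by
    intro k
    induction k with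
    | zero => intro x a b; simpa using hs a b
    | succ k ih =>
      intro x a b
      have h1 : (lam x) ^ (k + 1) *ᵥ b = (lam x) ^ k *ᵥ (mul x b) := by
        rw [← hmv, Matrix.mulVec_mulVec, ← pow_succ]
      have h2 : mul x ((lam x) ^ k *ᵥ a) = (lam x) ^ (k + 1) *ᵥ a := by
        rw [← hmv, Matrix.mulVec_mulVec, ← pow_succ']
      rw [h1, ih x a (mul x b), hs (mul x b) ((lam x) ^ k *ᵥ a),
        hsym1 x ((lam x) ^ k *ᵥ a) b, h2]
  -- nilpotency: lam x ^ n = 0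
  have hpow0 : ∀ x : Fin n → ℝ, (lam x) ^ n = 0 := by
    intro x
    have h1 := Matrix.isNilpotent_charpoly_sub_pow_of_isNilpotent (hnil x)
    have h2 : (lam x).charpoly = Polynomial.X ^ (Fintype.card (Fin n)) := by
      rw [← sub_eq_zero]; exact h1.eq_zero
    have h3 := (lam x).aeval_self_charpoly
    rw [h2] at h3
    simpa using h3
  -- the inverse of 1 + lam x
  have hinv : ∀ x : Fin n → ℝ,
      (1 + lam x)⁻¹ = ∑ k ∈ Finset.range n, (-1 : ℝ) ^ k • (lam x) ^ k := by
    intro x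
    apply Matrix.inv_eq_right_inv
    have hN : (∑ k ∈ Finset.range n, (-1 : ℝ) ^ k • (lam x) ^ k)
        = ∑ k ∈ Finset.range n, (-(lam x)) ^ k := by
      refine Finset.sum_congr rfl fun k _ => ?_
      rw [← neg_one_smul ℝ (lam x), smul_pow]
    have h := geom_sum_mul (-(lam x)) n
    have hneg : (-(lam x)) ^ n = 0 := by
      rw [← neg_one_smul ℝ (lam x), smul_pow, hpow0, smul_zero]
    rw [hneg, zero_sub] at h
    have h2 : (∑ i ∈ Finset.range n, (-(lam x)) ^ i) * (1 + lam x) = 1 := by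
      have e : (-(lam x) - 1 : Matrix (Fin n) (Fin n) ℝ) = -(1 + lam x) := by abel
      rw [e, mul_neg] at h
      exact neg_inj.mp h
    rw [hN]
    -- need (1 + lam x) * N = 1; N and 1 + lam x commute (polynomials in lam x)
    have hcomm : Commute (∑ i ∈ Finset.range n, (-(lam x)) ^ i) (1 + lam x) := by
      apply Commute.add_right
      · exact Commute.one_right _
      · apply Finset.sum_induction _ (fun M => Commute M (lam x))
        · exact fun a b => Commute.add_left
        · exact Commute.zero_left _
        · intro i _; exact (Commute.neg_left (Commute.refl (lam x))).pow_left i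
    rw [← hcomm.eq]
    exact h2
  -- sums of matrices applied to vectors
  have sum_mulVec : ∀ (s : Finset ℕ) (f : ℕ → Matrix (Fin n) (Fin n) ℝ) (v : Fin n → ℝ),
      (∑ k ∈ s, f k) *ᵥ v = ∑ k ∈ s, f k *ᵥ v := by
    intro s f v
    induction s using Finset.cons_induction with
    | empty => simp
    | cons a s ha ih => rw [Finset.sum_cons, Finset.sum_cons, Matrix.add_mulVec, ih]
  have hdot_sum : ∀ (s : Finset ℕ) (a : Fin n → ℝ) (f : ℕ → (Fin n → ℝ)),
      a ⬝ᵥ H *ᵥ (∑ k ∈ s, f k) = ∑ k ∈ s, a ⬝ᵥ H *ᵥ f k := by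
    intro s a f
    induction s using Finset.cons_induction with
    | empty => simp
    | cons b s hb ih =>
      rw [Finset.sum_cons, Finset.sum_cons, Matrix.mulVec_add, dotProduct_add, ih]
  have hdot_smul : ∀ (c : ℝ) (a w : Fin n → ℝ),
      a ⬝ᵥ H *ᵥ (c • w) = c * (a ⬝ᵥ H *ᵥ w) := by
    intro c a w
    rw [Matrix.mulVec_smul, dotProduct_smul, smul_eq_mul]
  -- derivative of pw
  have hpwD : ∀ (k : ℕ) (x : Fin n → ℝ), HasFDerivAt (pw n mul k)
      (((k : ℝ) + 1) • LinearMap.toContinuousLinearMap ((lam x) ^ k).mulVecLin) x := by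
    intro k
    induction k with
    | zero =>
      intro x
      have heq : (((0 : ℕ) : ℝ) + 1) • LinearMap.toContinuousLinearMap
          ((lam x) ^ 0).mulVecLin = ContinuousLinearMap.id ℝ (Fin n → ℝ) := by
        ext v
        simp [Matrix.mulVecLin_apply]
      rw [heq]
      exact hasFDerivAt_id x
    | succ k ih =>
      intro x
      have hc : HasFDerivAt (fun y : Fin n → ℝ => mulCLM n mul y) (mulCLM n mul) x :=
        (mulCLM n mul).hasFDerivAt
      have h := hc.clm_apply (ih x)
      have hfun : (fun y => mulCLM n mul y (pw n mul k y)) = pw n mul (k + 1) := rfl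
      rw [hfun] at h
      have heq : ((mulCLM n mul x).comp
            (((k : ℝ) + 1) • LinearMap.toContinuousLinearMap ((lam x) ^ k).mulVecLin)
          + (mulCLM n mul).flip (pw n mul k x))
          = (((k + 1 : ℕ) : ℝ) + 1) • LinearMap.toContinuousLinearMap
              ((lam x) ^ (k + 1)).mulVecLin := by
        refine ContinuousLinearMap.ext fun v => ?_
        have e1 : mul x ((lam x) ^ k *ᵥ v) = (lam x) ^ (k + 1) *ᵥ v := by
          rw [← hmv, Matrix.mulVec_mulVec, ← pow_succ']
        have e2 : mul v (pw n mul k x) = (lam x) ^ (k + 1) *ᵥ v := by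
          rw [habel, ← hmv, hlpw]
        simp only [ContinuousLinearMap.add_apply, ContinuousLinearMap.comp_apply,
          ContinuousLinearMap.smul_apply, ContinuousLinearMap.flip_apply,
          mulCLM_apply, LinearMap.coe_toContinuousLinearMap', Matrix.mulVecLin_apply]
        rw [LinearMap.map_smul, e1, e2]
        push_cast
        module
      rw [heq] at h
      exact h
  -- F as a sum
  have hBc : ∀ a b : Fin n → ℝ, bcH n H a b = a ⬝ᵥ H *ᵥ b := fun a b => rfl
  have hFfun : F = fun y => ∑ k ∈ Finset.range n,
      ((-1 : ℝ) ^ k * ((k : ℝ) + 2)⁻¹) * bcH n H y (pw n mul k y) := by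
    funext y
    rw [hF y, ← Matrix.mulVec_mulVec, sum_mulVec]
    simp only [Matrix.smul_mulVec]
    rw [hdot_sum]
    refine Finset.sum_congr rfl fun k _ => ?_
    rw [hdot_smul, hBc, hpwv]
  -- HasFDerivAt for F
  have hFD : ∀ x : Fin n → ℝ, HasFDerivAt F
      (∑ k ∈ Finset.range n, ((-1 : ℝ) ^ k * ((k : ℝ) + 2)⁻¹) •
        ((bcH n H x).comp (((k : ℝ) + 1) • LinearMap.toContinuousLinearMap
            ((lam x) ^ k).mulVecLin)
          + (bcH n H).flip (pw n mul k x))) x := by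
    intro x
    rw [hFfun]
    apply HasFDerivAt.fun_sum
    intro k _
    exact ((bcH n H).hasFDerivAt.clm_apply (hpwD k x)).const_mul _
  -- Part 1
  have h1 : ∀ x v : Fin n → ℝ,
      fderiv ℝ F x v = Matrix.vecMul x (H * (1 + lam x)⁻¹) ⬝ᵥ v := by
    intro x v
    rw [(hFD x).fderiv]
    rw [← Matrix.dotProduct_mulVec, hinv, ← Matrix.mulVec_mulVec, sum_mulVec]
    simp only [Matrix.smul_mulVec]
    rw [hdot_sum, ContinuousLinearMap.sum_apply]
    refine Finset.sum_congr rfl fun k _ => ?_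
    rw [hdot_smul, hsymk k x x v]
    simp only [ContinuousLinearMap.smul_apply, ContinuousLinearMap.add_apply,
      ContinuousLinearMap.comp_apply, ContinuousLinearMap.flip_apply,
      LinearMap.coe_toContinuousLinearMap', Matrix.mulVecLin_apply, bcH_apply]
    rw [hdot_smul, hsymk k x x v, hpwv]
    have hk2 : ((k : ℝ) + 2) ≠ 0 := by positivity
    simp only [smul_eq_mul, bcH_apply]
    field_simp
    ring
  refine ⟨h1, ?_⟩
  -- Part 2: the Hessian at 0
  ext i j
  have hn0 : 0 < n := i.pos
  -- rewrite the inner function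
  have hg : (fun y => fderiv ℝ F y (Pi.single j 1))
      = fun y => ∑ k ∈ Finset.range n,
          (-1 : ℝ) ^ k * bcH n H y (pwc n mul (Pi.single j 1) k y) := by
    funext y
    rw [h1 y, ← Matrix.dotProduct_mulVec, hinv, ← Matrix.mulVec_mulVec, sum_mulVec]
    simp only [Matrix.smul_mulVec]
    rw [hdot_sum]
    refine Finset.sum_congr rfl fun k _ => ?_
    rw [hdot_smul, hBc, hpwcv]
  -- differentiability of pwc at 0
  have hpwcD : ∀ k : ℕ, ∃ D : (Fin n → ℝ) →L[ℝ] (Fin n → ℝ), HasFDerivAt (pwc n mul (Pi.single j 1) k) D (0 : Fin n → ℝ) := by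
    intro k
    induction k with
    | zero => exact ⟨0, hasFDerivAt_const _ _⟩
    | succ k ih =>
      obtain ⟨D, hD⟩ := ih
      have hc : HasFDerivAt (fun y : Fin n → ℝ => mulCLM n mul y) (mulCLM n mul)
        (0 : Fin n → ℝ) := (mulCLM n mul).hasFDerivAt
      exact ⟨(mulCLM n mul (0 : Fin n → ℝ)).comp D
        + (mulCLM n mul).flip (pwc n mul (Pi.single j 1) k 0), hc.clm_apply hD⟩
  choose D hD using hpwcD
  have hgD : HasFDerivAt (fun y => ∑ k ∈ Finset.range n,
      (-1 : ℝ) ^ k * bcH n H y (pwc n mul (Pi.single j 1) k y))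
      (∑ k ∈ Finset.range n, (-1 : ℝ) ^ k •
        ((bcH n H (0 : Fin n → ℝ)).comp (D k)
          + (bcH n H).flip (pwc n mul (Pi.single j 1) k 0))) (0 : Fin n → ℝ) := by
    apply HasFDerivAt.fun_sum
    intro k _
    exact ((bcH n H).hasFDerivAt.clm_apply (hD k)).const_mul _
  have hpwc0 : ∀ k : ℕ, pwc n mul (Pi.single j 1) (k + 1) (0 : Fin n → ℝ) = 0 := by
    intro k
    show mul 0 (pwc n mul (Pi.single j 1) k 0) = 0
    rw [map_zero]
    rfl
  have hBc0 : ∀ b : Fin n → ℝ, bcH n H (0 : Fin n → ℝ) b = 0 := by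
    intro b
    rw [hBc, zero_dotProduct]
  show (fderiv ℝ (fun y => fderiv ℝ F y (Pi.single j 1)) 0) (Pi.single i 1) = H i j
  rw [hg, hgD.fderiv]
  rw [ContinuousLinearMap.sum_apply]
  rw [Finset.sum_eq_single_of_mem 0 (Finset.mem_range.2 hn0)]
  · simp only [ContinuousLinearMap.smul_apply, ContinuousLinearMap.add_apply,
      ContinuousLinearMap.comp_apply, ContinuousLinearMap.flip_apply, pow_zero, one_smul]
    rw [hBc0, zero_add]
    show bcH n H (Pi.single i 1) (Pi.single j 1) = H i j
    rw [hBc]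
    simp [single_dotProduct, Matrix.mulVec_single]
  · intro k hk hk0
    obtain ⟨m, rfl⟩ := Nat.exists_eq_succ_of_ne_zero hk0
    simp only [ContinuousLinearMap.smul_apply, ContinuousLinearMap.add_apply,
      ContinuousLinearMap.comp_apply, ContinuousLinearMap.flip_apply]
    rw [hBc0, hpwc0, map_zero, add_zero, smul_zero]
end

section
/- Let 𝒜 be a complete abelian LSA, and suppose λ, λ̃ : ℝⁿ → gl(n,ℝ) are two (commutative, complete) LSA structures such that (I + λ_x)^{-1}x = (I + λ̃_x)^{-1}x for all x ∈ ℝⁿ. Then λ = λ̃. -/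
/-!
Substituting `t • x` for `x` in the hypothesis and using linearity of `λ` shows that
`(1 + t λ_x)⁻¹ x = (1 + t λ̃_x)⁻¹ x` for every `t ≠ 0`. Since
`t λ_x (1 + t λ_x)⁻¹ x = x - (1 + t λ_x)⁻¹ x`, also `λ_x (1 + t λ_x)⁻¹ x = λ̃_x (1 + t λ̃_x)⁻¹ x`
for `t ≠ 0`; both sides are continuous in `t` (nilpotency keeps `1 + t λ_x` invertible), so
letting `t → 0` gives `λ_x x = λ̃_x x`. Commutativity makes `(x, y) ↦ λ_x y` a symmetric bilinear
map, and polarization recovers it from its diagonal.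
-/

open Matrix

theorem LinearMap.eq_of_mulVec_self_eq {m K : Type*} [Fintype m] [Field K] [NeZero (2 : K)]
    {lam lam' : (m → K) →ₗ[K] Matrix m m K}
    (hcomm : ∀ x y, lam x *ᵥ y = lam y *ᵥ x) (hcomm' : ∀ x y, lam' x *ᵥ y = lam' y *ᵥ x)
    (hdiag : ∀ x, lam x *ᵥ x = lam' x *ᵥ x) : lam = lam' := by
  have hpol (x y : m → K) : (2 : K) • (lam x *ᵥ y) = (2 : K) • (lam' x *ᵥ y) := by
    have h := hdiag (x + y)
    rw [map_add, map_add, add_mulVec, add_mulVec, mulVec_add, mulVec_add, mulVec_add, mulVec_add,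
      hdiag x, hdiag y, hcomm y x, hcomm' y x] at h
    linear_combination (norm := module) h
  refine LinearMap.ext fun x => ?_
  exact ext_iff_mulVec.2 fun y => smul_right_injective _ two_ne_zero (hpol x y)

namespace Matrix

variable {m : Type*} [Fintype m] [DecidableEq m] {N M : Matrix m m ℝ}

theorem isUnit_det_one_add_smul (hN : IsNilpotent N) (t : ℝ) : IsUnit (1 + t • N).det :=
  (isUnit_iff_isUnit_det _).1 (hN.smul t).isUnit_one_add

theorem continuous_inv_one_add_smul (hN : IsNilpotent N) :
    Continuous fun t : ℝ => (1 + t • N)⁻¹ :=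
  continuous_iff_continuousAt.2 fun t =>
    (continuousAt_matrix_inv _
      (NormedRing.inverse_continuousAt (isUnit_det_one_add_smul hN t).unit)).comp
      (f := fun t : ℝ => 1 + t • N) (by fun_prop)

theorem smul_mulVec_inv_one_add_smul_mulVec (hN : IsNilpotent N) (t : ℝ) (x : m → ℝ) :
    t • (N *ᵥ ((1 + t • N)⁻¹ *ᵥ x)) = x - (1 + t • N)⁻¹ *ᵥ x := by
  have hx : (1 + t • N) *ᵥ ((1 + t • N)⁻¹ *ᵥ x) = x := by
    rw [mulVec_mulVec, mul_nonsing_inv _ (isUnit_det_one_add_smul hN t), one_mulVec]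
  rwa [add_mulVec, one_mulVec, smul_mulVec, ← eq_sub_iff_add_eq'] at hx

theorem mulVec_eq_of_inv_one_add_smul_mulVec_eq (hN : IsNilpotent N) (hM : IsNilpotent M)
    {x : m → ℝ} (h : ∀ t : ℝ, t ≠ 0 → (1 + t • N)⁻¹ *ᵥ x = (1 + t • M)⁻¹ *ᵥ x) :
    N *ᵥ x = M *ᵥ x := by
  have hcont {A : Matrix m m ℝ} (hA : IsNilpotent A) :
      Continuous fun t : ℝ => A *ᵥ ((1 + t • A)⁻¹ *ᵥ x) :=
    continuous_const.matrix_mulVec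
      ((continuous_inv_one_add_smul hA).matrix_mulVec continuous_const)
  have hne : ∀ t ≠ (0 : ℝ), N *ᵥ ((1 + t • N)⁻¹ *ᵥ x) = M *ᵥ ((1 + t • M)⁻¹ *ᵥ x) := by
    intro t ht
    rw [← smul_right_inj ht, smul_mulVec_inv_one_add_smul_mulVec hN,
      smul_mulVec_inv_one_add_smul_mulVec hM, h t ht]
  simpa using congrFun ((hcont hN).ext_on (dense_compl_singleton 0) (hcont hM) hne) 0

theorem mulVec_self_eq_of_inv_one_add_mulVec_eq {lam lam' : (m → ℝ) →ₗ[ℝ] Matrix m m ℝ}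
    (hnil : ∀ x, IsNilpotent (lam x)) (hnil' : ∀ x, IsNilpotent (lam' x))
    (heq : ∀ x, (1 + lam x)⁻¹ *ᵥ x = (1 + lam' x)⁻¹ *ᵥ x) (x : m → ℝ) :
    lam x *ᵥ x = lam' x *ᵥ x :=
  mulVec_eq_of_inv_one_add_smul_mulVec_eq (hnil x) (hnil' x) fun t ht => by
    have := heq (t • x)
    rwa [map_smul, map_smul, mulVec_smul, mulVec_smul, smul_right_inj ht] at this

end Matrix

theorem stmt_6_general (n : ℕ)
    (lam lam' : (Fin n → ℝ) →ₗ[ℝ] Matrix (Fin n) (Fin n) ℝ)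
    (hnil : ∀ x, IsNilpotent (lam x)) (hnil' : ∀ x, IsNilpotent (lam' x))
    (hcomm : ∀ x y, (lam x).mulVec y = (lam y).mulVec x)
    (hcomm' : ∀ x y, (lam' x).mulVec y = (lam' y).mulVec x)
    (heq : ∀ x, (1 + lam x)⁻¹.mulVec x = (1 + lam' x)⁻¹.mulVec x) :
    lam = lam' :=
  LinearMap.eq_of_mulVec_self_eq hcomm hcomm'
    (mulVec_self_eq_of_inv_one_add_mulVec_eq hnil hnil' heq)

theorem stmt_6 (n : ℕ)
    (lam lam' : (Fin n → ℝ) →ₗ[ℝ] Matrix (Fin n) (Fin n) ℝ)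
    (hnil : ∀ x, IsNilpotent (lam x)) (hnil' : ∀ x, IsNilpotent (lam' x))
    (hcomm : ∀ x y, (lam x).mulVec y = (lam y).mulVec x)
    (hcomm' : ∀ x y, (lam' x).mulVec y = (lam' y).mulVec x)
    (hassoc : ∀ x y, lam x * lam y = lam ((lam x).mulVec y))
    (hassoc' : ∀ x y, lam' x * lam' y = lam' ((lam' x).mulVec y))
    (heq : ∀ x, (1 + lam x)⁻¹.mulVec x = (1 + lam' x)⁻¹.mulVec x) :
    lam = lam' :=
  stmt_6_general n lam lam' hnil hnil' hcomm hcomm' heq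
end

section
/- Let 𝒜 be the n-dimensional abelian filiform LSA with e_i e_j = e_{i+j} (zero if i+j > n) and the Hessian-type inner product ⟨e_i,e_j⟩ = δ_{i+j,n+1}. Then every derivation B of 𝒜 that is an infinitesimal isometry (satisfying ⟨Ba,b⟩ + ⟨a,Bb⟩ = 0 for all a,b) is zero, and the space of infinitesimal-similarity derivations (satisfying ⟨Ba,b⟩ + ⟨a,Bb⟩ = (2 tr B / n)⟨a,b⟩) is one-dimensional, spanned by B₁ with B₁(e_j) = j·e_j. -/
/-- The product of the `n`-dimensional abelian filiform LSA `ℝ[t]·t/(t^{n+1})`. -/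
def filiformMul (n : ℕ) (x y : Fin n → ℝ) : Fin n → ℝ :=
  fun k => ∑ i : Fin n, ∑ j : Fin n,
    if (i : ℕ) + (j : ℕ) + 1 = (k : ℕ) then x i * y j else 0

/-- The Hessian-type inner product `⟨e_i, e_j⟩ = δ_{i+j,n+1}` on the filiform LSA. -/
def filiformForm (n : ℕ) (x y : Fin n → ℝ) : ℝ :=
  ∑ i : Fin n, ∑ j : Fin n,
    if (i : ℕ) + (j : ℕ) + 1 = n then x i * y j else 0

/-!
A derivation `D` is determined by `u = D e₁`, because `e_k = e₁ᵏ`: the Leibniz rule gives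
`(D e_k)_{k+m-1} = k u_m`. Pairing with `e₁`, the similarity equation
`⟨D e_k, e₁⟩ + ⟨e_k, D e₁⟩ = s ⟨e_k, e₁⟩` for `k = n + 1 - m` reads
`(k + 1) u_m = s δ_{m,1}`, so `u = s/(n+1) e₁`, and then `D e_k = (s/(n+1)) k e_k` by
induction, i.e. `D = s/(n+1) B₁`.
Infinitesimal isometries are the case `s = 0`, and `B₁` itself is a similarity with
`s = n + 1 = 2 tr B₁ / n`.

In the code the index `i : Fin n` stands for the basis vector `e_{i+1}`.
-/

variable {n : ℕ}

theorem filiformMul_comm (x y : Fin n → ℝ) : filiformMul n x y = filiformMul n y x := by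
  funext k
  rw [filiformMul, filiformMul, Finset.sum_comm]
  simp only [add_comm (_ : ℕ), mul_comm (x _)]

theorem filiformMul_smul_left (c : ℝ) (x y : Fin n → ℝ) :
    filiformMul n (c • x) y = c • filiformMul n x y := by
  funext k
  simp only [filiformMul, Pi.smul_apply, smul_eq_mul, Finset.mul_sum, mul_ite, mul_zero, mul_assoc]

theorem filiformMul_smul_right (c : ℝ) (x y : Fin n → ℝ) :
    filiformMul n x (c • y) = c • filiformMul n x y := by
  rw [filiformMul_comm, filiformMul_smul_left, filiformMul_comm]

theorem filiformMul_single_right_apply (x : Fin n → ℝ) (j k : Fin n) :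
    filiformMul n x (Pi.single j 1) k =
      ∑ i : Fin n, if (i : ℕ) + j + 1 = k then x i else 0 := by
  rw [filiformMul, Finset.sum_comm, Fintype.sum_eq_single j fun j' hj' => by simp [hj']]
  simp

theorem filiformMul_single_right_apply_of_add_eq (x : Fin n → ℝ) {i j k : Fin n}
    (h : (i : ℕ) + j + 1 = k) : filiformMul n x (Pi.single j 1) k = x i := by
  rw [filiformMul_single_right_apply,
    Fintype.sum_eq_single i fun i' hi' => if_neg fun h' => hi' (by omega)]
  simp [h]

theorem filiformMul_single_single {i j k : Fin n} (h : (i : ℕ) + j + 1 = k) :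
    filiformMul n (Pi.single i 1) (Pi.single j 1) = Pi.single k 1 := by
  funext m
  rw [filiformMul_single_right_apply, Fintype.sum_eq_single i fun i' hi' => by simp [hi']]
  simp only [Pi.single_eq_same, Pi.single_apply, Fin.ext_iff]
  split_ifs <;> first | rfl | omega

theorem filiformForm_eq_sum (x y : Fin n → ℝ) :
    filiformForm n x y = ∑ i, x i * y (Fin.rev i) := by
  refine Finset.sum_congr rfl fun i _ => ?_
  rw [Fintype.sum_eq_single (Fin.rev i) fun j hj => if_neg fun h => hj (by ext; simp; omega)]
  simp [Fin.val_rev]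
  omega

theorem filiformForm_single_left (i : Fin n) (y : Fin n → ℝ) :
    filiformForm n (Pi.single i 1) y = y (Fin.rev i) := by
  simp [filiformForm_eq_sum, Pi.single_apply]

theorem filiformForm_single_right (x : Fin n → ℝ) (j : Fin n) :
    filiformForm n x (Pi.single j 1) = x (Fin.rev j) := by
  simp [filiformForm_eq_sum, Pi.single_apply, Fin.rev_eq_iff]

def IsFiliformDerivation (D : Module.End ℝ (Fin n → ℝ)) : Prop :=
  ∀ a b, D (filiformMul n a b) = filiformMul n (D a) b + filiformMul n a (D b)

def IsFiliformSimilarity (s : ℝ) (D : Module.End ℝ (Fin n → ℝ)) : Prop :=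
  ∀ a b, filiformForm n (D a) b + filiformForm n a (D b) = s * filiformForm n a b

def filiformGrading (n : ℕ) : Module.End ℝ (Fin n → ℝ) :=
  Matrix.toLin' (Matrix.diagonal fun i : Fin n => ((i : ℕ) : ℝ) + 1)

theorem filiformGrading_apply (x : Fin n → ℝ) :
    filiformGrading n x = fun i : Fin n => ((i : ℕ) + 1 : ℝ) * x i := by
  funext i
  simp [filiformGrading, Matrix.mulVec_diagonal]

theorem filiformGrading_single (k : Fin n) :
    filiformGrading n (Pi.single k 1) = ((k : ℕ) + 1 : ℝ) • Pi.single k 1 := by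
  funext i
  rcases eq_or_ne i k with rfl | h <;> simp [filiformGrading_apply, *]

theorem isFiliformDerivation_filiformGrading : IsFiliformDerivation (filiformGrading n) := by
  intro a b
  funext k
  simp only [filiformGrading_apply, Pi.add_apply, filiformMul, Finset.mul_sum,
    ← Finset.sum_add_distrib]
  refine Finset.sum_congr rfl fun i _ => Finset.sum_congr rfl fun j _ => ?_
  split_ifs with h
  · rw [← h]; push_cast; ring
  · ring

theorem isFiliformSimilarity_filiformGrading :
    IsFiliformSimilarity (n + 1) (filiformGrading n) := by
  intro a b
  simp only [filiformGrading_apply, filiformForm_eq_sum, Finset.mul_sum, ← Finset.sum_add_distrib]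
  refine Finset.sum_congr rfl fun i _ => ?_
  rw [Fin.val_rev, Nat.cast_sub i.isLt]
  push_cast
  ring

theorem trace_filiformGrading :
    LinearMap.trace ℝ (Fin n → ℝ) (filiformGrading n) = n * (n + 1) / 2 := by
  rw [filiformGrading, Matrix.trace_toLin'_eq, Matrix.trace_diagonal,
    Fin.sum_univ_eq_sum_range (fun i => (i : ℝ) + 1), eq_div_iff two_ne_zero]
  have gauss := Finset.sum_range_id_mul_two (n + 1)
  rw [Finset.sum_range_succ', add_zero, Nat.add_sub_cancel, Nat.mul_comm (n + 1)] at gauss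
  exact_mod_cast gauss

variable [NeZero n] {D : Module.End ℝ (Fin n → ℝ)}

theorem filiformGrading_ne_zero : filiformGrading n ≠ 0 := fun h => by
  simpa [h] using congrFun (filiformGrading_single (0 : Fin n)) 0

theorem IsFiliformDerivation.apply_single_of_add_eq (hD : IsFiliformDerivation D) {k m p : Fin n}
    (h : (k : ℕ) + m = p) :
    D (Pi.single k 1) p = ((k : ℕ) + 1 : ℝ) * D (Pi.single 0 1) m := by
  induction hk : (k : ℕ) generalizing k p with
  | zero =>
    obtain rfl : k = 0 := Fin.ext hk
    obtain rfl : m = p := Fin.ext (by simpa using h)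
    simp
  | succ l ih =>
    have hprod : filiformMul n (Pi.single 0 1) (Pi.single ⟨l, by omega⟩ 1) = Pi.single k 1 :=
      filiformMul_single_single (by simp [hk])
    rw [← hprod, hD, Pi.add_apply,
      filiformMul_single_right_apply_of_add_eq _ (i := m) (by simp; omega), filiformMul_comm,
      filiformMul_single_right_apply_of_add_eq _ (i := ⟨p - 1, by omega⟩) (by simp; omega),
      ih (p := ⟨p - 1, by omega⟩) (by simp; omega) rfl]
    push_cast
    ring

theorem IsFiliformDerivation.apply_single_zero_of_similarity (hD : IsFiliformDerivation D)
    {s : ℝ} (hs : IsFiliformSimilarity s D) :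
    D (Pi.single 0 1) = (s / (n + 1)) • Pi.single 0 1 := by
  funext m
  have key := hs (Pi.single (Fin.rev m) 1) (Pi.single 0 1)
  rw [filiformForm_single_right, filiformForm_single_left, filiformForm_single_right, Fin.rev_rev,
    hD.apply_single_of_add_eq (m := m) (by simp [Fin.val_rev]; omega)] at key
  rw [Pi.smul_apply, smul_eq_mul]
  rcases eq_or_ne m 0 with rfl | hm
  · have hrev : ((Fin.rev (0 : Fin n) : ℕ) : ℝ) = n - 1 := by
      rw [Fin.val_rev, Nat.cast_sub (by omega)]; simp
    rw [Pi.single_eq_same, hrev] at key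
    rw [Pi.single_eq_same, mul_one, eq_div_iff (by positivity)]
    linarith
  · rw [Pi.single_eq_of_ne (Fin.rev_injective.ne hm.symm), mul_zero] at key
    rw [Pi.single_eq_of_ne hm, mul_zero]
    nlinarith [show (0 : ℝ) < (Fin.rev m : ℕ) + 2 by positivity]

theorem IsFiliformDerivation.apply_single_of_apply_single_zero (hD : IsFiliformDerivation D)
    {c : ℝ} (h0 : D (Pi.single 0 1) = c • Pi.single 0 1) (k : Fin n) :
    D (Pi.single k 1) = (c * ((k : ℕ) + 1 : ℝ)) • Pi.single k 1 := by
  induction hk : (k : ℕ) generalizing k with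
  | zero =>
    obtain rfl : k = 0 := Fin.ext hk
    simpa using h0
  | succ l ih =>
    have hprod : filiformMul n (Pi.single 0 1) (Pi.single ⟨l, by omega⟩ 1) = Pi.single k 1 :=
      filiformMul_single_single (by simp [hk])
    rw [← hprod, hD, h0, ih ⟨l, by omega⟩ rfl, filiformMul_smul_left, filiformMul_smul_right,
      hprod, ← add_smul]
    congr 1
    push_cast
    ring

theorem IsFiliformDerivation.eq_smul_filiformGrading (hD : IsFiliformDerivation D) {s : ℝ}
    (hs : IsFiliformSimilarity s D) : D = (s / (n + 1)) • filiformGrading n :=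
  (Pi.basisFun ℝ (Fin n)).ext fun k => by
    rw [Pi.basisFun_apply,
      hD.apply_single_of_apply_single_zero (hD.apply_single_zero_of_similarity hs),
      LinearMap.smul_apply, filiformGrading_single, smul_smul]

theorem stmt_12 (n : ℕ) (hn : 1 ≤ n)
    (B1 : (Fin n → ℝ) →ₗ[ℝ] (Fin n → ℝ))
    (hB1 : ∀ x, B1 x = fun i : Fin n => ((i.1 : ℝ) + 1) * x i) :
    -- every infinitesimal-isometry derivation vanishes
    (∀ B : (Fin n → ℝ) →ₗ[ℝ] (Fin n → ℝ),
      (∀ a b, B (filiformMul n a b) = filiformMul n (B a) b + filiformMul n a (B b)) →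
      (∀ a b, filiformForm n (B a) b + filiformForm n a (B b) = 0) → B = 0) ∧
    -- B₁ is a nonzero infinitesimal-similarity derivation
    B1 ≠ 0 ∧
    (∀ a b, B1 (filiformMul n a b) = filiformMul n (B1 a) b + filiformMul n a (B1 b)) ∧
    (∀ a b, filiformForm n (B1 a) b + filiformForm n a (B1 b)
        = (2 * LinearMap.trace ℝ (Fin n → ℝ) B1 / n) * filiformForm n a b) ∧
    -- and it spans the space of infinitesimal-similarity derivations
    (∀ B : (Fin n → ℝ) →ₗ[ℝ] (Fin n → ℝ),
      (∀ a b, B (filiformMul n a b) = filiformMul n (B a) b + filiformMul n a (B b)) →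
      (∀ a b, filiformForm n (B a) b + filiformForm n a (B b)
          = (2 * LinearMap.trace ℝ (Fin n → ℝ) B / n) * filiformForm n a b) →
      ∃ c : ℝ, B = c • B1) := by
  obtain rfl : B1 = filiformGrading n :=
    LinearMap.ext fun x => (hB1 x).trans (filiformGrading_apply x).symm
  have : NeZero n := ⟨by omega⟩
  have hfactor : 2 * LinearMap.trace ℝ (Fin n → ℝ) (filiformGrading n) / n = n + 1 := by
    rw [trace_filiformGrading]
    field_simp [NeZero.ne n]
  refine ⟨fun B hD hiso => ?_, filiformGrading_ne_zero, isFiliformDerivation_filiformGrading,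
    hfactor ▸ isFiliformSimilarity_filiformGrading,
    fun B hD hsim => ⟨_, IsFiliformDerivation.eq_smul_filiformGrading hD hsim⟩⟩
  have hsim : IsFiliformSimilarity 0 B := fun a b => (hiso a b).trans (zero_mul _).symm
  simpa using IsFiliformDerivation.eq_smul_filiformGrading hD hsim
end

section
/- Let 𝒜 be the n-dimensional abelian filiform LSA identified with ℝⁿ via the basis e₁,…,eₙ (e_i e_j = e_{i+j}), with H the anti-diagonal Hessian metric ⟨e_i,e_j⟩ = δ_{i+j,n+1} and B the similarity derivation B(e_j) = (j/(n+1))e_j. Then for x = x₁e₁ + ⋯ + xₙeₙ, the polynomial F(x) = xᵀH(I+λ_x)^{-1}Bx equals the Cayley polynomial F(x₁,…,xₙ) = Σ_{d=2}^{n+1} (−1)^d (1/d) Σ_{i₁+⋯+i_d = n+1} x_{i₁}⋯x_{i_d}. -/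
open Matrix

/-- Left multiplication by `x = x₁e₁ + ⋯ + xₙeₙ` in the abelian filiform LSA
`ℝ[t]·t/(t^{n+1})` (with `e_i = t^i`), as an `n × n` matrix. -/
def lamFil (n : ℕ) (x : Fin n → ℝ) : Matrix (Fin n) (Fin n) ℝ :=
  Matrix.of fun k b =>
    if h : (b : ℕ) < (k : ℕ) then
      x ⟨(k : ℕ) - (b : ℕ) - 1,
        Nat.lt_of_le_of_lt (le_trans (Nat.sub_le _ _) (Nat.sub_le _ _)) k.isLt⟩
    else 0

/-- The anti-diagonal Hessian metric `⟨e_i, e_j⟩ = δ_{i+j,n+1}`. -/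
def Hfil (n : ℕ) : Matrix (Fin n) (Fin n) ℝ :=
  Matrix.of fun i j => if (i : ℕ) + (j : ℕ) + 1 = n then (1 : ℝ) else 0

/-- The similarity derivation `B(e_j) = (j/(n+1))·e_j`. -/
noncomputable def Bfil (n : ℕ) : Matrix (Fin n) (Fin n) ℝ :=
  Matrix.diagonal fun j : Fin n => ((j : ℕ) + 1 : ℝ) / ((n : ℕ) + 1)

/-- The Cayley polynomial
`F(x₁,…,xₙ) = Σ_{d=2}^{n+1} (−1)^d (1/d) Σ_{i₁+⋯+i_d = n+1} x_{i₁}⋯x_{i_d}`,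
where the inner sum ranges over ordered tuples of positive integers summing to `n+1`
(encoded as `c : Fin d → Fin n` with parts `c t + 1`). -/
noncomputable def cayleyPoly (n : ℕ) (x : Fin n → ℝ) : ℝ :=
  ∑ d ∈ Finset.Icc 2 (n + 1), (-1 : ℝ) ^ d * (d : ℝ)⁻¹ *
    ∑ c ∈ Finset.univ.filter
        (fun c : Fin d → Fin n => ∑ t, ((c t : ℕ) + 1) = n + 1),
      ∏ t, x (c t)


open Finset

noncomputable def Sfil (n m s : ℕ) (x : Fin n → ℝ) : ℝ :=
  ∑ c ∈ Finset.univ.filter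
      (fun c : Fin m → Fin n => ∑ t, ((c t : ℕ) + 1) = s),
    ∏ t, x (c t)

lemma Sfil_zero (n s : ℕ) (x : Fin n → ℝ) :
    Sfil n 0 s x = if s = 0 then 1 else 0 := by
  unfold Sfil
  rw [Finset.sum_filter]
  simp [eq_comm]

lemma Sfil_eq_zero_of_lt (n m s : ℕ) (h : s < m) (x : Fin n → ℝ) :
    Sfil n m s x = 0 := by
  unfold Sfil
  apply Finset.sum_eq_zero
  intro c hc
  exfalso
  rw [Finset.mem_filter] at hc
  have h1 : m ≤ ∑ t, ((c t : ℕ) + 1) := by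
    calc m = ∑ _t : Fin m, 1 := by simp
    _ ≤ _ := Finset.sum_le_sum (fun t _ => by omega)
  omega

lemma Sfil_succ (n m s : ℕ) (x : Fin n → ℝ) :
    Sfil n (m+1) s x
      = ∑ a : Fin n, x a *
          (if (a : ℕ) + 1 ≤ s then Sfil n m (s - ((a : ℕ) + 1)) x else 0) := by
  unfold Sfil
  rw [Finset.sum_filter]
  rw [← Fintype.sum_equiv (Fin.consEquiv (fun _ : Fin (m+1) => Fin n))
      (fun p : Fin n × (Fin m → Fin n) =>
        if (∑ t, (((Fin.cons p.1 p.2 : Fin (m+1) → Fin n) t : ℕ) + 1) = s) then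
          ∏ t, x ((Fin.cons p.1 p.2 : Fin (m+1) → Fin n) t) else 0)
      _ (fun p => rfl)]
  rw [Fintype.sum_prod_type]
  refine Finset.sum_congr rfl (fun a _ => ?_)
  simp only [Fin.sum_univ_succ, Fin.prod_univ_succ, Fin.cons_zero, Fin.cons_succ]
  by_cases h : (a : ℕ) + 1 ≤ s
  · rw [if_pos h, Finset.sum_filter, Finset.mul_sum]
    refine Finset.sum_congr rfl (fun g _ => ?_)
    have hiff : ((a : ℕ) + 1 + ∑ t, ((g t : ℕ) + 1) = s)
        ↔ (∑ t, ((g t : ℕ) + 1) = s - ((a : ℕ) + 1)) := by omega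
    split_ifs with h1 h2 h2
    · ring
    · exact absurd (hiff.mp h1) h2
    · exact absurd (hiff.mpr h2) h1
    · ring
  · rw [if_neg h, mul_zero]
    apply Finset.sum_eq_zero
    intro g _
    rw [if_neg (by omega)]

lemma lamFil_pow_apply (n : ℕ) (x : Fin n → ℝ) (m : ℕ) (k b : Fin n) :
    ((lamFil n x) ^ m) k b
      = if (b : ℕ) ≤ (k : ℕ) then Sfil n m ((k : ℕ) - (b : ℕ)) x else 0 := by
  induction m generalizing k b with
  | zero =>
    rw [pow_zero, Matrix.one_apply]
    rw [Sfil_zero]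
    have : k = b ↔ (k : ℕ) = (b : ℕ) := Fin.ext_iff
    split_ifs with h1 h2 h3 <;> simp_all <;> omega
  | succ m ih =>
    rw [pow_succ, Matrix.mul_apply]
    by_cases hbk : (b : ℕ) ≤ (k : ℕ)
    · rw [if_pos hbk, Sfil_succ]
      have hL : ∀ c : Fin n, ((lamFil n x) ^ m) k c * (lamFil n x) c b
          = if (c : ℕ) ≤ (k : ℕ) ∧ (b : ℕ) < (c : ℕ) then
              Sfil n m ((k : ℕ) - (c : ℕ)) x *
                x ⟨(c : ℕ) - (b : ℕ) - 1, by omega⟩ else 0 := by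
        intro c
        rw [ih k c]
        show _ * (if h : (b : ℕ) < (c : ℕ) then _ else 0) = _
        split_ifs with h1 h2 h3 h4 h5 <;> first
          | rfl | (exfalso; omega) | ring
      have hR : ∀ a : Fin n, x a *
            (if (a : ℕ) + 1 ≤ (k : ℕ) - (b : ℕ) then
              Sfil n m ((k : ℕ) - (b : ℕ) - ((a : ℕ) + 1)) x else 0)
          = if (a : ℕ) + 1 ≤ (k : ℕ) - (b : ℕ) then
              x a * Sfil n m ((k : ℕ) - (b : ℕ) - ((a : ℕ) + 1)) x else 0 := by
        intro a; split_ifs <;> ring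
      simp only [hL, hR]
      rw [← Finset.sum_filter, ← Finset.sum_filter]
      refine Finset.sum_bij'
        (i := fun c (hc : c ∈ Finset.univ.filter
            (fun c : Fin n => (c : ℕ) ≤ (k : ℕ) ∧ (b : ℕ) < (c : ℕ))) =>
          (⟨(c : ℕ) - (b : ℕ) - 1, by
            have := c.isLt; omega⟩ : Fin n))
        (j := fun a (ha : a ∈ Finset.univ.filter
            (fun a : Fin n => (a : ℕ) + 1 ≤ (k : ℕ) - (b : ℕ))) =>
          (⟨(b : ℕ) + (a : ℕ) + 1, by
            simp only [Finset.mem_filter] at ha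
            have := k.isLt; omega⟩ : Fin n))
        ?_ ?_ ?_ ?_ ?_
      · intro c hc
        simp only [Finset.mem_filter, Finset.mem_univ, true_and] at hc ⊢
        omega
      · intro a ha
        simp only [Finset.mem_filter, Finset.mem_univ, true_and] at ha ⊢
        omega
      · intro c hc
        simp only [Finset.mem_filter, Finset.mem_univ, true_and] at hc
        apply Fin.ext; simp; omega
      · intro a ha
        apply Fin.ext; simp; omega
      · intro c hc
        simp only [Finset.mem_filter, Finset.mem_univ, true_and] at hc
        have h1 : ((k : ℕ) - (b : ℕ)) - (((c : ℕ) - (b : ℕ) - 1) + 1)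
            = (k : ℕ) - (c : ℕ) := by omega
        simp only [h1]
        ring
    · rw [if_neg hbk]
      apply Finset.sum_eq_zero
      intro c _
      rw [ih k c]
      show _ * (if h : (b : ℕ) < (c : ℕ) then _ else 0) = 0
      split_ifs with h1 h2 <;> first | (exfalso; omega) | ring

lemma lamFil_pow_n (n : ℕ) (x : Fin n → ℝ) : (lamFil n x) ^ n = 0 := by
  ext k b
  rw [lamFil_pow_apply]
  rw [Matrix.zero_apply]
  split_ifs with h
  · exact Sfil_eq_zero_of_lt n n _ (by have := k.isLt; omega) x
  · rfl

lemma inv_one_add_lamFil (n : ℕ) (x : Fin n → ℝ) :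
    (1 + lamFil n x)⁻¹
      = ∑ m ∈ Finset.range n, ((-1 : ℝ) ^ m) • (lamFil n x) ^ m := by
  apply Matrix.inv_eq_left_inv
  have h1 : ∑ m ∈ Finset.range n, ((-1 : ℝ) ^ m) • (lamFil n x) ^ m
      = ∑ m ∈ Finset.range n, (-(lamFil n x)) ^ m := by
    refine Finset.sum_congr rfl (fun m _ => ?_)
    rw [← neg_one_smul ℝ (lamFil n x), smul_pow]
  rw [h1]
  have h2 := geom_sum_mul (-(lamFil n x)) n
  have h3 : (-(lamFil n x)) ^ n = 0 := by
    rw [← neg_one_smul ℝ (lamFil n x), smul_pow, lamFil_pow_n, smul_zero]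
  rw [h3, zero_sub] at h2
  have h4 : -(lamFil n x) - 1 = -(1 + lamFil n x) := by
    rw [neg_add]; abel
  rw [h4, mul_neg, neg_eq_iff_eq_neg, neg_neg] at h2
  exact h2

/-- Weighted composition sum: weight `(c t₀) + 1` on coordinate `t₀`. -/
noncomputable def Wfil (n d : ℕ) (x : Fin n → ℝ) (t₀ : Fin d) : ℝ :=
  ∑ c ∈ Finset.univ.filter
      (fun c : Fin d → Fin n => ∑ t, ((c t : ℕ) + 1) = n + 1),
    (((c t₀ : ℕ) : ℝ) + 1) * ∏ t, x (c t)

lemma Wfil_indep (n d : ℕ) (x : Fin n → ℝ) (t₀ t₁ : Fin d) :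
    Wfil n d x t₀ = Wfil n d x t₁ := by
  unfold Wfil
  rw [Finset.sum_filter, Finset.sum_filter]
  refine Fintype.sum_equiv
    (Equiv.arrowCongr (Equiv.swap t₀ t₁) (Equiv.refl (Fin n))) _ _ (fun c => ?_)
  have key : ∀ t : Fin d,
      (Equiv.arrowCongr (Equiv.swap t₀ t₁) (Equiv.refl (Fin n)) c) t
        = c (Equiv.swap t₀ t₁ t) := by
    intro t
    simp only [Equiv.arrowCongr_apply, Equiv.refl_apply, Function.comp_apply,
      Equiv.symm_swap]
  have hsum : ∑ t, (((Equiv.arrowCongr (Equiv.swap t₀ t₁) (Equiv.refl (Fin n)) c) t : ℕ) + 1)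
      = ∑ t, ((c t : ℕ) + 1) := by
    simp only [key]
    exact Equiv.sum_comp (Equiv.swap t₀ t₁) (fun t => ((c t : ℕ) + 1))
  have hprod : ∏ t, x ((Equiv.arrowCongr (Equiv.swap t₀ t₁) (Equiv.refl (Fin n)) c) t)
      = ∏ t, x (c t) := by
    simp only [key]
    exact Equiv.prod_comp (Equiv.swap t₀ t₁) (fun t => x (c t))
  rw [hsum, hprod, key t₁, Equiv.swap_apply_right]

lemma Wfil_total (n d : ℕ) (x : Fin n → ℝ) (t₀ : Fin d) :
    (d : ℝ) * Wfil n d x t₀ = ((n : ℝ) + 1) * Sfil n d (n + 1) x := by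
  have h1 : ∑ t₁ : Fin d, Wfil n d x t₁ = (d : ℝ) * Wfil n d x t₀ := by
    rw [Finset.sum_congr rfl (fun t₁ _ => Wfil_indep n d x t₁ t₀)]
    simp [Finset.sum_const, nsmul_eq_mul]
  rw [← h1]
  unfold Wfil Sfil
  rw [Finset.sum_comm, Finset.mul_sum]
  refine Finset.sum_congr rfl (fun c hc => ?_)
  rw [Finset.mem_filter] at hc
  rw [← Finset.sum_mul]
  congr 1
  have : ∑ t₁ : Fin d, (((c t₁ : ℕ) : ℝ) + 1) = ((∑ t, ((c t : ℕ) + 1) : ℕ) : ℝ) := by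
    push_cast; ring
  rw [this, hc.2]
  push_cast; ring

lemma Hfil_mul_apply (n : ℕ) (A : Matrix (Fin n) (Fin n) ℝ) (i j : Fin n) :
    ((Hfil n) * A) i j
      = A ⟨n - 1 - (i : ℕ), by have := i.isLt; omega⟩ j := by
  rw [Matrix.mul_apply]
  rw [Finset.sum_eq_single (⟨n - 1 - (i : ℕ), by have := i.isLt; omega⟩ : Fin n)]
  · show (if (i : ℕ) + (n - 1 - (i : ℕ)) + 1 = n then (1 : ℝ) else 0) * _ = _
    rw [if_pos (by have := i.isLt; omega), one_mul]
  · intro k _ hk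
    show (if (i : ℕ) + (k : ℕ) + 1 = n then (1 : ℝ) else 0) * _ = 0
    rw [if_neg, zero_mul]
    intro hc; apply hk; apply Fin.ext; simp; omega
  · intro h; exact absurd (Finset.mem_univ _) h

lemma Wfil_cons (n m : ℕ) (x : Fin n → ℝ) :
    Wfil n (m + 2) x (Fin.succ 0)
      = ∑ i : Fin n, ∑ j : Fin n, x i * x j * (((j : ℕ) : ℝ) + 1) *
          (if (i : ℕ) + (j : ℕ) + 2 ≤ n + 1 then
            Sfil n m (n - 1 - (i : ℕ) - (j : ℕ)) x else 0) := by
  unfold Wfil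
  rw [Finset.sum_filter]
  rw [← Fintype.sum_equiv (Fin.consEquiv (fun _ : Fin (m+2) => Fin n))
      (fun p : Fin n × (Fin (m+1) → Fin n) =>
        if (∑ t, (((Fin.cons p.1 p.2 : Fin (m+2) → Fin n) t : ℕ) + 1) = n + 1) then
          ((((Fin.cons p.1 p.2 : Fin (m+2) → Fin n) (Fin.succ 0) : ℕ) : ℝ) + 1) *
            ∏ t, x ((Fin.cons p.1 p.2 : Fin (m+2) → Fin n) t) else 0)
      _ (fun p => rfl)]
  rw [Fintype.sum_prod_type]
  refine Finset.sum_congr rfl (fun i _ => ?_)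
  rw [← Fintype.sum_equiv (Fin.consEquiv (fun _ : Fin (m+1) => Fin n))
      (fun p : Fin n × (Fin m → Fin n) =>
        if (∑ t, (((Fin.cons i (Fin.cons p.1 p.2) : Fin (m+2) → Fin n) t : ℕ) + 1) = n + 1) then
          ((((Fin.cons i (Fin.cons p.1 p.2) : Fin (m+2) → Fin n) (Fin.succ 0) : ℕ) : ℝ) + 1) *
            ∏ t, x ((Fin.cons i (Fin.cons p.1 p.2) : Fin (m+2) → Fin n) t) else 0)
      _ (fun p => rfl)]
  rw [Fintype.sum_prod_type]
  refine Finset.sum_congr rfl (fun j _ => ?_)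
  simp only [Fin.sum_univ_succ, Fin.prod_univ_succ, Fin.cons_zero, Fin.cons_succ]
  by_cases h : (i : ℕ) + (j : ℕ) + 2 ≤ n + 1
  · rw [if_pos h]
    unfold Sfil
    rw [Finset.sum_filter, Finset.mul_sum]
    refine Finset.sum_congr rfl (fun g _ => ?_)
    have hiff : ((i : ℕ) + 1 + ((j : ℕ) + 1 + ∑ t, ((g t : ℕ) + 1)) = n + 1)
        ↔ (∑ t, ((g t : ℕ) + 1) = n - 1 - (i : ℕ) - (j : ℕ)) := by omega
    split_ifs with h1 h2 h2
    · ring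
    · exact absurd (hiff.mp h1) h2
    · exact absurd (hiff.mpr h2) h1
    · ring
  · rw [if_neg h, mul_zero]
    apply Finset.sum_eq_zero
    intro g _
    rw [if_neg (by omega)]

lemma expand_fil (n m : ℕ) (x : Fin n → ℝ) :
    (x ⬝ᵥ ((Hfil n) * ((lamFil n x) ^ m) * (Bfil n)).mulVec x) * ((n : ℝ) + 1)
      = Wfil n (m + 2) x (Fin.succ 0) := by
  rw [Wfil_cons]
  have hn : ((n : ℝ) + 1) ≠ 0 := by positivity
  have hentry : ∀ i j : Fin n,
      ((Hfil n) * ((lamFil n x) ^ m) * (Bfil n)) i j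
        = (if (j : ℕ) ≤ n - 1 - (i : ℕ) then
            Sfil n m (n - 1 - (i : ℕ) - (j : ℕ)) x else 0) *
          ((((j : ℕ) : ℝ) + 1) / ((n : ℝ) + 1)) := by
    intro i j
    rw [Matrix.mul_apply]
    have : ∀ k : Fin n, ((Hfil n) * ((lamFil n x) ^ m)) i k * (Bfil n) k j
        = ((Hfil n) * ((lamFil n x) ^ m)) i k *
            (if k = j then (((j : ℕ) : ℝ) + 1) / ((n : ℝ) + 1) else 0) := by
      intro k
      unfold Bfil
      rw [Matrix.diagonal_apply]
      split_ifs with hkj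
      · subst hkj; push_cast; ring_nf
      · rfl
    simp only [this, mul_ite, mul_zero]
    rw [Finset.sum_ite_eq' Finset.univ j]
    rw [if_pos (Finset.mem_univ j), Hfil_mul_apply, lamFil_pow_apply]
  simp only [dotProduct, Matrix.mulVec, hentry]
  rw [Finset.sum_mul]
  refine Finset.sum_congr rfl (fun i _ => ?_)
  rw [Finset.mul_sum, Finset.sum_mul]
  refine Finset.sum_congr rfl (fun j _ => ?_)
  have hij : ((j : ℕ) ≤ n - 1 - (i : ℕ)) ↔ ((i : ℕ) + (j : ℕ) + 2 ≤ n + 1) := by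
    have := i.isLt; have := j.isLt; omega
  split_ifs with h1 h2 h2
  · field_simp
  · exact absurd (hij.mp h1) h2
  · exact absurd (hij.mpr h2) h1
  · ring

theorem stmt_16 (n : ℕ) :
    ∀ x : Fin n → ℝ,
      x ⬝ᵥ ((Hfil n) * (1 + lamFil n x)⁻¹ * (Bfil n)).mulVec x = cayleyPoly n x := by
  intro x
  rw [inv_one_add_lamFil]
  have hexp : (Hfil n) * (∑ m ∈ Finset.range n, ((-1 : ℝ) ^ m) • (lamFil n x) ^ m) * (Bfil n)
      = ∑ m ∈ Finset.range n, ((-1 : ℝ) ^ m) • ((Hfil n) * (lamFil n x) ^ m * (Bfil n)) := by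
    rw [Finset.mul_sum, Finset.sum_mul]
    refine Finset.sum_congr rfl (fun m _ => ?_)
    rw [Matrix.mul_smul, Matrix.smul_mul]
  rw [hexp]
  have hgen : ∀ s : Finset ℕ, ∀ M : ℕ → Matrix (Fin n) (Fin n) ℝ,
      x ⬝ᵥ (∑ m ∈ s, M m).mulVec x = ∑ m ∈ s, x ⬝ᵥ (M m).mulVec x := by
    intro s M
    induction s using Finset.cons_induction with
    | empty => simp [Matrix.zero_mulVec]
    | cons a s ha ih =>
      rw [Finset.sum_cons, Finset.sum_cons, Matrix.add_mulVec, dotProduct_add, ih]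
  have hlin : x ⬝ᵥ (∑ m ∈ Finset.range n,
        ((-1 : ℝ) ^ m) • ((Hfil n) * (lamFil n x) ^ m * (Bfil n))).mulVec x
      = ∑ m ∈ Finset.range n, ((-1 : ℝ) ^ m) *
          (x ⬝ᵥ ((Hfil n) * (lamFil n x) ^ m * (Bfil n)).mulVec x) := by
    rw [hgen]
    refine Finset.sum_congr rfl (fun m _ => ?_)
    rw [Matrix.smul_mulVec, dotProduct_smul, smul_eq_mul]
  rw [hlin]
  have hdot : ∀ m : ℕ,
      x ⬝ᵥ ((Hfil n) * (lamFil n x) ^ m * (Bfil n)).mulVec x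
        = (((m : ℝ) + 2))⁻¹ * Sfil n (m + 2) (n + 1) x := by
    intro m
    have h1 := expand_fil n m x
    have h2 := Wfil_total n (m + 2) x (Fin.succ 0)
    have hn : ((n : ℝ) + 1) ≠ 0 := by positivity
    have hm2 : ((m : ℝ) + 2) ≠ 0 := by positivity
    push_cast at h2
    set dot := x ⬝ᵥ ((Hfil n) * (lamFil n x) ^ m * (Bfil n)).mulVec x with hd
    have h3 : dot * ((m : ℝ) + 2) = Sfil n (m + 2) (n + 1) x := by
      apply mul_right_cancel₀ hn
      calc dot * ((m : ℝ) + 2) * ((n : ℝ) + 1)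
          = ((m : ℝ) + 2) * (dot * ((n : ℝ) + 1)) := by ring
        _ = ((m : ℝ) + 2) * Wfil n (m + 2) x (Fin.succ 0) := by rw [h1]
        _ = ((n : ℝ) + 1) * Sfil n (m + 2) (n + 1) x := h2
        _ = Sfil n (m + 2) (n + 1) x * ((n : ℝ) + 1) := by ring
    rw [inv_mul_eq_div, eq_div_iff hm2]
    exact h3
  simp only [hdot]
  unfold cayleyPoly
  refine Finset.sum_bij' (i := fun (m : ℕ) (_ : m ∈ Finset.range n) => m + 2)
    (j := fun (d : ℕ) (_ : d ∈ Finset.Icc 2 (n + 1)) => d - 2) ?_ ?_ ?_ ?_ ?_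
  · intro m hm
    rw [Finset.mem_range] at hm
    show m + 2 ∈ Finset.Icc 2 (n + 1)
    rw [Finset.mem_Icc]; omega
  · intro d hd
    rw [Finset.mem_Icc] at hd
    show d - 2 ∈ Finset.range n
    rw [Finset.mem_range]; omega
  · intro m hm; show m + 2 - 2 = m; omega
  · intro d hd
    rw [Finset.mem_Icc] at hd; show d - 2 + 2 = d; omega
  · intro m hm
    have hpow : (-1 : ℝ) ^ (m + 2) = (-1 : ℝ) ^ m := by
      rw [pow_add]; norm_num
    rw [hpow]
    have hc : (((m + 2 : ℕ) : ℝ)) = (m : ℝ) + 2 := by push_cast; ring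
    rw [hc]
    show _ = _ * _ * Sfil n (m + 2) (n + 1) x
    ring
end

section
/- Let 𝒜 be an n-dimensional complete abelian LSA that is not filiform. Then (λ_x)^{n-1} = 0 for every x ∈ 𝒜; consequently the associated polynomial F(x) = xᵀH(½I − ⅓λ_x + ¼λ_x² − ⋯)x has total degree at most n, hence is not the Cayley polynomial (which has degree n+1). -/
/-!
Since `λ_x ^ k v = x ^ k v ∈ 𝒜^(k+1)`, the hypothesis `𝒜ⁿ = 0` forces `λ_x ^ (n-1) = 0`.
On the diagonal line `t ↦ t • (1, …, 1)` the form `F` becomes `t² ∑_{k<n} c_k t^k`, whose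
`t^(n+1)`-coefficient is a multiple of `λ ^ (n-1)` and hence vanishes, while the Cayley polynomial
has `t^(n+1)`-coefficient `±1/(n+1)`: the only composition of `n+1` into `n+1` parts is `1+⋯+1`.
-/

open Matrix

/-- The descending series of ideals: `Apow mul 1 = ⊤` (𝒜¹ = 𝒜) and
`Apow mul (i+1) = span {a·b | b ∈ Apow mul i}` (𝒜^{i+1} = 𝒜·𝒜^i). -/
def Apow {E : Type*} [AddCommGroup E] [Module ℝ E]
    (mul : E →ₗ[ℝ] E →ₗ[ℝ] E) : ℕ → Submodule ℝ E
  | 0 => ⊤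
  | 1 => ⊤
  | (i + 2) => Submodule.span ℝ {z | ∃ a b, b ∈ Apow mul (i + 1) ∧ z = mul a b}

open Polynomial Finset

section Apow

variable {E : Type*} [AddCommGroup E] [Module ℝ E] (mul : E →ₗ[ℝ] E →ₗ[ℝ] E)

theorem pow_apply_mem_Apow (x : E) (k : ℕ) (v : E) :
    ((mul x : Module.End ℝ E) ^ k) v ∈ Apow mul (k + 1) := by
  induction k with
  | zero => simp [Apow]
  | succ k ih =>
    rw [pow_succ', Module.End.mul_apply]
    exact Submodule.subset_span ⟨x, _, ih, rfl⟩

theorem pow_eq_zero_of_Apow_eq_bot {k : ℕ} (hk : Apow mul (k + 1) = ⊥) (x : E) :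
    (mul x : Module.End ℝ E) ^ k = 0 :=
  LinearMap.ext fun v => by simpa [hk] using pow_apply_mem_Apow mul x k v

end Apow

theorem coeff_X_sq_mul_sum_range_C_mul_X_pow {R : Type*} [Semiring R] (a : ℕ → R) {m : ℕ}
    (hm : 1 ≤ m) : (X ^ 2 * ∑ k ∈ range m, C (a k) * X ^ k).coeff (m + 1) = a (m - 1) := by
  rw [show m + 1 = m - 1 + 2 by omega, coeff_X_pow_mul', if_pos (by omega), Nat.add_sub_cancel,
    finsetSum_coeff]
  simp only [coeff_C_mul_X_pow]
  rw [sum_ite_eq, if_pos (mem_range.mpr (by omega))]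

theorem dotProduct_mul_sum_smul_pow_mulVec_smul {R ι : Type*} [CommRing R] [Fintype ι]
    [DecidableEq ι] (H M : Matrix ι ι R) (c : ℕ → R) (m : ℕ) (v : ι → R) (t : R) :
    (t • v) ⬝ᵥ (H * ∑ k ∈ range m, c k • (t • M) ^ k) *ᵥ (t • v) =
      (X ^ 2 * ∑ k ∈ range m, C (c k * (v ⬝ᵥ (H * M ^ k) *ᵥ v)) * X ^ k).eval t := by
  simp only [_root_.smul_pow, smul_smul, mul_sum, sum_mulVec, dotProduct_sum, Matrix.mul_smul,
    smul_mulVec, mulVec_smul, dotProduct_smul, smul_dotProduct, smul_eq_mul, eval_mul,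
    eval_pow, eval_X, eval_finsetSum, eval_C]
  refine sum_congr rfl fun k _ => ?_
  ring

theorem card_filter_sum_val_add_one_eq_self_add_one {n : ℕ} (hn : 1 ≤ n) :
    #{c : Fin (n + 1) → Fin n | ∑ t, ((c t : ℕ) + 1) = n + 1} = 1 := by
  have : NeZero n := ⟨by omega⟩
  rw [card_eq_one]
  refine ⟨0, ext fun c => ?_⟩
  simp [sum_add_distrib, sum_eq_zero_iff, funext_iff]

noncomputable def cayleyPolyDiag (n : ℕ) : ℝ[X] :=
  ∑ d ∈ Icc 2 (n + 1), C ((-1 : ℝ) ^ d * (d : ℝ)⁻¹ *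
    #{c : Fin d → Fin n | ∑ s, ((c s : ℕ) + 1) = n + 1}) * X ^ d

theorem cayleyPoly_smul_one (n : ℕ) (t : ℝ) :
    cayleyPoly n (t • fun _ => 1) = (cayleyPolyDiag n).eval t := by
  simp only [cayleyPoly, cayleyPolyDiag, eval_finsetSum, eval_mul, eval_C, eval_pow, eval_X,
    Pi.smul_apply, smul_eq_mul, mul_one, prod_const, card_univ, Fintype.card_fin, sum_const,
    nsmul_eq_mul]
  refine sum_congr rfl fun d _ => ?_
  ring

theorem coeff_cayleyPolyDiag_self_add_one {n : ℕ} (hn : 1 ≤ n) :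
    (cayleyPolyDiag n).coeff (n + 1) ≠ 0 := by
  simp only [cayleyPolyDiag, finsetSum_coeff, coeff_C_mul_X_pow, sum_ite_eq, mem_Icc,
    card_filter_sum_val_add_one_eq_self_add_one hn]
  rw [if_pos (by omega)]
  norm_num
  positivity

theorem stmt_18_general (n : ℕ) (hn : 1 ≤ n)
    (mul : (Fin n → ℝ) →ₗ[ℝ] (Fin n → ℝ) →ₗ[ℝ] (Fin n → ℝ))
    (H : Matrix (Fin n) (Fin n) ℝ)
    (lam : (Fin n → ℝ) → Matrix (Fin n) (Fin n) ℝ)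
    (hlam : ∀ x, lam x = LinearMap.toMatrix' (mul x))
    -- 𝒜 is not filiform: 𝒜ⁿ = 0
    (hnf : Apow mul n = ⊥) :
    (∀ x : Fin n → ℝ, (lam x) ^ (n - 1) = 0) ∧
    (fun x : Fin n → ℝ => x ⬝ᵥ
        (H * (∑ k ∈ Finset.range n, ((-1 : ℝ) ^ k * ((k : ℝ) + 2)⁻¹) • (lam x) ^ k)).mulVec x)
      ≠ cayleyPoly n := by
  have hpow : ∀ x, lam x ^ (n - 1) = 0 := fun x => by
    rw [hlam]
    change LinearMap.toMatrixAlgEquiv' (mul x) ^ (n - 1) = 0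
    rw [← map_pow, pow_eq_zero_of_Apow_eq_bot mul (by rwa [Nat.sub_add_cancel hn]) x, map_zero]
  refine ⟨hpow, fun heq => ?_⟩
  have hlam_smul (t : ℝ) (x : Fin n → ℝ) : lam (t • x) = t • lam x := by
    rw [hlam, hlam, map_smul, map_smul]
  set v : Fin n → ℝ := fun _ => 1
  set c : ℕ → ℝ := fun k => (-1 : ℝ) ^ k * ((k : ℝ) + 2)⁻¹
  have hline : X ^ 2 * ∑ k ∈ range n, C (c k * (v ⬝ᵥ (H * lam v ^ k) *ᵥ v)) * X ^ k =
      cayleyPolyDiag n := Polynomial.funext fun t => by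
    rw [← dotProduct_mul_sum_smul_pow_mulVec_smul, ← cayleyPoly_smul_one, ← hlam_smul]
    exact congrFun heq (t • v)
  apply coeff_cayleyPolyDiag_self_add_one hn
  rw [← hline, coeff_X_sq_mul_sum_range_C_mul_X_pow _ hn, hpow]
  simp only [mul_zero, zero_mulVec, dotProduct_zero]

theorem stmt_18 (n : ℕ) (hn : 1 ≤ n)
    (mul : (Fin n → ℝ) →ₗ[ℝ] (Fin n → ℝ) →ₗ[ℝ] (Fin n → ℝ))
    (habel : ∀ a b, mul a b = mul b a)
    (hassoc : ∀ a b c, mul (mul a b) c = mul a (mul b c))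
    (hnil : ∀ a, IsNilpotent (mul a : Module.End ℝ (Fin n → ℝ)))
    (H : Matrix (Fin n) (Fin n) ℝ) (hsymm : H.IsSymm)
    (hnd : ∀ u : Fin n → ℝ, (∀ v, u ⬝ᵥ H.mulVec v = 0) → u = 0)
    (hhess : ∀ a b c : Fin n → ℝ, a ⬝ᵥ H.mulVec (mul b c) = b ⬝ᵥ H.mulVec (mul a c))
    (lam : (Fin n → ℝ) → Matrix (Fin n) (Fin n) ℝ)
    (hlam : ∀ x, lam x = LinearMap.toMatrix' (mul x))
    -- 𝒜 is not filiform: 𝒜ⁿ = 0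
    (hnf : Apow mul n = ⊥) :
    (∀ x : Fin n → ℝ, (lam x) ^ (n - 1) = 0) ∧
    (fun x : Fin n → ℝ => x ⬝ᵥ
        (H * (∑ k ∈ Finset.range n, ((-1 : ℝ) ^ k * ((k : ℝ) + 2)⁻¹) • (lam x) ^ k)).mulVec x)
      ≠ cayleyPoly n :=
  stmt_18_general n hn mul H lam hlam hnf
end
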